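/- arXiv:1901.02333 — 6 statements merged into one kernel-verified Lean document; each statement's English description precedes it below -/
import Mathlib

section
/- Let k : [0,1]×[0,1] → ℝ be a continuous kernel having rank at least d, i.e. k(s,t) = Σ_{m=1}^{d} λ_m φ_m(s)φ_m(t) + B(s,t) for all s,t ∈ [0,1], where λ_1,…,λ_d > 0, the functions φ_1,…,φ_d : [0,1] → ℝ are continuous and orthonormal in L²([0,1]), and B : [0,1]×[0,1] → ℝ is a continuous nonnegative-definite kernel. Then there exist points u_1 < u_2 < … < u_d in [0,1] such that the d×d matrix with entries k(u_i,u_j), 1 ≤ i,j ≤ d, is invertible. -/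
open MeasureTheory Matrix Submodule

/-!
Orthonormality makes `φ₁, …, φ_d` linearly independent as functions on `[0,1]`, so the
evaluation vectors `(φ_m(x))_m`, `x ∈ [0,1]`, span `ℝ^d`, and `d` of them, taken at points
sorted as `u₁ < ⋯ < u_d`, form a basis. Then `Φ = (φ_m(u_i))` is invertible and
`(k(u_i, u_j)) = Φᵀ diag(λ) Φ + (B(u_i, u_j))` is positive definite, hence invertible.
-/

section Evaluation

variable {K V X ι : Type*} [Field K] [Fintype ι]

theorem span_range_eval_eq_top_of_linearIndependent {φ : ι → X → K}
    (hφ : LinearIndependent K φ) : span K (Set.range fun x i => φ i x) = ⊤ := by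
  classical
  by_contra hne
  obtain ⟨g, hg, hmap⟩ := exists_dual_map_eq_bot_of_lt_top (lt_top_iff_ne_top.2 hne) inferInstance
  have hvanish (x : X) : g (fun i => φ i x) = 0 := by
    have := mem_map_of_mem (f := g) (subset_span (Set.mem_range_self (f := fun x i => φ i x) x))
    rwa [hmap, mem_bot] at this
  -- `g` is `v ↦ ∑ i, c i * v i`, and vanishing on evaluation vectors means `∑ i, c i • φ i = 0`.
  set c : ι → K := fun i => g fun j => if i = j then 1 else 0
  have hc : ∑ i, c i • φ i = 0 := funext fun x => by
    simpa [c, mul_comm] using (g.pi_apply_eq_sum_univ _).symm.trans (hvanish x)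
  have hc0 := Fintype.linearIndependent_iff.1 hφ c hc
  refine hg (LinearMap.ext fun v => ?_)
  rw [g.pi_apply_eq_sum_univ v]
  exact Finset.sum_eq_zero fun i _ => by rw [show g _ = c i from rfl, hc0 i, smul_zero]

theorem exists_linearIndependent_comp_of_span_range_eq_top [AddCommGroup V] [Module K V]
    [FiniteDimensional K V] {v : X → V} (hv : span K (Set.range v) = ⊤)
    (hcard : Fintype.card ι = Module.finrank K V) :
    ∃ x : ι → X, LinearIndependent K (v ∘ x) := by
  obtain ⟨κ, a, -, hspan, hli⟩ := exists_linearIndependent' K v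
  have : Finite κ := hli.finite
  obtain ⟨e⟩ : Nonempty (ι ≃ κ) := by
    rw [← Finite.card_eq, Nat.card_eq_fintype_card, hcard,
      Module.finrank_eq_nat_card_basis (Module.Basis.mk hli (by rw [hspan, hv]))]
  exact ⟨a ∘ e, hli.comp e e.injective⟩

theorem exists_linearIndependent_eval {φ : ι → X → K}
    (hφ : LinearIndependent K φ) : ∃ x : ι → X, LinearIndependent K fun j i => φ i (x j) :=
  exists_linearIndependent_comp_of_span_range_eq_top
    (span_range_eval_eq_top_of_linearIndependent hφ) (Module.finrank_fintype_fun_eq_card K).symm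

end Evaluation

theorem linearIndependent_restrict_uIcc_of_integral_mul_eq_ite {ι : Type*} [Fintype ι]
    [DecidableEq ι] {a b : ℝ} {φ : ι → ℝ → ℝ} (hφ : ∀ i, ContinuousOn (φ i) (Set.uIcc a b))
    (hortho : ∀ i j, ∫ x in a..b, φ i x * φ j x = if i = j then 1 else 0) :
    LinearIndependent ℝ fun i (x : Set.uIcc a b) => φ i x := by
  refine Fintype.linearIndependent_iff.2 fun c hc j => ?_
  have hzero : ∀ x ∈ Set.uIcc a b, ∑ i, c i * φ i x = 0 := fun x hx => by
    simpa using congrFun hc ⟨x, hx⟩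
  calc c j = ∑ i, c i * ∫ x in a..b, φ i x * φ j x := by simp [hortho]
    _ = ∑ i, ∫ x in a..b, c i * φ i x * φ j x := by
      simp only [mul_assoc, intervalIntegral.integral_const_mul]
    _ = ∫ x in a..b, ∑ i, c i * φ i x * φ j x := (intervalIntegral.integral_finsetSum fun i _ =>
        ((continuousOn_const.mul (hφ i)).mul (hφ j)).intervalIntegrable).symm
    _ = ∫ x in a..b, (0 : ℝ) := intervalIntegral.integral_congr fun x hx => by
      rw [← Finset.sum_mul, hzero x hx, zero_mul]
    _ = 0 := intervalIntegral.integral_zero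

theorem Matrix.posDef_of_eq_sum_mul_add {ι κ : Type*} [Fintype ι] [Fintype κ] [DecidableEq κ]
    {M B : Matrix ι ι ℝ} {lam : κ → ℝ} {Φ : Matrix κ ι ℝ} (hlam : ∀ m, 0 < lam m)
    (hΦ : LinearIndependent ℝ Φ.col) (hB : B.PosSemidef)
    (hM : ∀ i j, M i j = ∑ m, lam m * Φ m i * Φ m j + B i j) : M.PosDef := by
  have hMeq : M = Φᴴ * diagonal lam * Φ + B := by
    ext i j
    simp [hM, mul_apply, diagonal, mul_comm]
  rw [hMeq]
  exact ((PosDef.diagonal hlam).conjTranspose_mul_mul_same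
    (mulVec_injective_iff.2 hΦ)).add_posSemidef hB

theorem Tuple.strictMono_comp_sort {n : ℕ} {α : Type*} [LinearOrder α] {f : Fin n → α}
    (hf : Function.Injective f) : StrictMono (f ∘ Tuple.sort f) :=
  (Tuple.monotone_sort f).strictMono_of_injective (hf.comp (Tuple.sort f).injective)

theorem exists_points_eval_matrix_det_ne_zero_general
    (d : ℕ) (k B : ℝ → ℝ → ℝ) (lam : Fin d → ℝ) (φ : Fin d → ℝ → ℝ)
    (hlam : ∀ m, 0 < lam m)
    (hφ : ∀ m, ContinuousOn (φ m) (Set.Icc 0 1))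
    (hortho : ∀ i j, (∫ x in (0:ℝ)..1, φ i x * φ j x) = if i = j then 1 else 0)
    (hBpsd : ∀ (n : ℕ) (s : Fin n → ℝ), (∀ i, s i ∈ Set.Icc (0:ℝ) 1) →
      (Matrix.of fun i j => B (s i) (s j)).PosSemidef)
    (hdecomp : ∀ s ∈ Set.Icc (0:ℝ) 1, ∀ t ∈ Set.Icc (0:ℝ) 1,
      k s t = (∑ m, lam m * φ m s * φ m t) + B s t) :
    ∃ u : Fin d → ℝ, (∀ i, u i ∈ Set.Icc (0:ℝ) 1) ∧ StrictMono u ∧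
      (Matrix.of fun i j => k (u i) (u j)).det ≠ 0 := by
  rw [← Set.uIcc_of_le zero_le_one] at hφ hBpsd hdecomp ⊢
  obtain ⟨x, hx⟩ := exists_linearIndependent_eval
    (linearIndependent_restrict_uIcc_of_integral_mul_eq_ite hφ hortho)
  have hx_inj : Function.Injective fun i => (x i : ℝ) :=
    fun i j hij => hx.injective (by simp only [hij])
  set u := (fun i => (x i : ℝ)) ∘ Tuple.sort fun i => (x i : ℝ)
  have hu : ∀ i, u i ∈ Set.uIcc 0 1 := fun i => (x _).2
  have hK : (of fun i j => k (u i) (u j)).PosDef :=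
    posDef_of_eq_sum_mul_add (Φ := of fun m i => φ m (u i)) hlam
      (hx.comp _ (Tuple.sort _).injective) (hBpsd d u hu) fun i j => hdecomp _ (hu i) _ (hu j)
  exact ⟨u, hu, Tuple.strictMono_comp_sort hx_inj, hK.det_pos.ne'⟩

/-- A continuous kernel on `[0,1]²` of rank at least `d`
(i.e. admitting a rank-`d` Mercer decomposition with a continuous nonnegative-definite
remainder) admits points `u₁ < … < u_d` in `[0,1]` at which the evaluation matrix
`(k(uᵢ,uⱼ))` is invertible. -/
theorem exists_points_eval_matrix_det_ne_zero
    (d : ℕ) (k B : ℝ → ℝ → ℝ) (lam : Fin d → ℝ) (φ : Fin d → ℝ → ℝ)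
    (hk : ContinuousOn (fun p : ℝ × ℝ => k p.1 p.2) (Set.Icc 0 1 ×ˢ Set.Icc 0 1))
    (hlam : ∀ m, 0 < lam m)
    (hφ : ∀ m, ContinuousOn (φ m) (Set.Icc 0 1))
    (hortho : ∀ i j, (∫ x in (0:ℝ)..1, φ i x * φ j x) = if i = j then 1 else 0)
    (hB : ContinuousOn (fun p : ℝ × ℝ => B p.1 p.2) (Set.Icc 0 1 ×ˢ Set.Icc 0 1))
    (hBpsd : ∀ (n : ℕ) (s : Fin n → ℝ), (∀ i, s i ∈ Set.Icc (0:ℝ) 1) →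
      (Matrix.of fun i j => B (s i) (s j)).PosSemidef)
    (hdecomp : ∀ s ∈ Set.Icc (0:ℝ) 1, ∀ t ∈ Set.Icc (0:ℝ) 1,
      k s t = (∑ m, lam m * φ m s * φ m t) + B s t) :
    ∃ u : Fin d → ℝ, (∀ i, u i ∈ Set.Icc (0:ℝ) 1) ∧ StrictMono u ∧
      (Matrix.of fun i j => k (u i) (u j)).det ≠ 0 :=
  exists_points_eval_matrix_det_ne_zero_general d k B lam φ hlam hφ hortho hBpsd hdecomp
end

section
/- Let k : [0,1]×[0,1] → ℝ be a continuous kernel having rank at least d (in the sense of a rank-d Mercer decomposition with a continuous nonnegative-definite remainder). Then there exist points u_1 < u_2 < … < u_d in [0,1] and a real δ > 0 such that: (1) the closed intervals [u_j − δ, u_j + δ] are pairwise disjoint; and (2) for every choice of points v_1,…,v_d ∈ [0,1] with |v_i − u_i| ≤ δ for each i, the d×d matrix with entries k(v_i,v_j) is invertible. -/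
/-!
Orthonormality makes `φ₁, …, φ_d` linearly independent as functions on `[0,1]`, so for suitable
points `u₁ < ⋯ < u_d` the matrix `Φ = (φ_m(u_i))` is invertible. There the kernel matrix is
`Φ Λ Φᵀ + (B(u_i,u_j))` with `Λ` diagonal and positive and the second summand positive
semidefinite, so it is positive definite. Its determinant depends continuously on the points,
hence stays nonzero on a small cube around `u`; shrinking the cube also separates the intervals.
-/

open MeasureTheory Set Filter Topology Metric
open scoped Matrix

theorem span_range_eval_eq_top_of_linearIndependent_s2 {ι X K : Type*} [Fintype ι] [Field K]
    {f : ι → X → K} (hf : LinearIndependent K f) :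
    Submodule.span K (range fun x m => f m x) = ⊤ := by
  classical
  by_contra hne
  obtain ⟨ℓ, hℓ, hmap⟩ := Submodule.exists_dual_map_eq_bot_of_lt_top (lt_top_iff_ne_top.2 hne)
    inferInstance
  set c : ι → K := fun m => ℓ fun j => if m = j then 1 else 0
  have hℓc (y : ι → K) : ℓ y = ∑ m, y m * c m := LinearMap.pi_apply_eq_sum_univ ℓ y
  have hc : ∑ m, c m • f m = 0 := by
    funext x
    have hx : ℓ (fun m => f m x) = 0 := by
      rw [← Submodule.mem_bot K, ← hmap]
      exact Submodule.mem_map_of_mem (Submodule.subset_span ⟨x, rfl⟩)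
    simpa [hℓc, mul_comm] using hx
  refine hℓ (LinearMap.ext fun y => ?_)
  simp [hℓc, Fintype.linearIndependent_iff.1 hf c hc]

theorem exists_linearIndependent_comp_of_span_range_eq_top_s2 {ι X K V : Type*} [Field K]
    [AddCommGroup V] [Module K V] (b : Module.Basis ι K V) {v : X → V}
    (hv : Submodule.span K (range v) = ⊤) :
    ∃ s : ι → X, LinearIndependent K (v ∘ s) := by
  obtain ⟨κ, a, -, hspan, hli⟩ := exists_linearIndependent' K v
  let b' : Module.Basis κ K V := Module.Basis.mk hli (by rw [hspan, hv])
  let e : ι ≃ κ := b.indexEquiv b'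
  exact ⟨a ∘ e, hli.comp e e.injective⟩

theorem exists_linearIndependent_eval_of_linearIndependent {ι X K : Type*} [Fintype ι] [Field K]
    {f : ι → X → K} (hf : LinearIndependent K f) :
    ∃ s : ι → X, LinearIndependent K fun i m => f m (s i) :=
  exists_linearIndependent_comp_of_span_range_eq_top_s2 (Pi.basisFun K ι)
    (span_range_eval_eq_top_of_linearIndependent_s2 hf)

theorem linearIndependent_restrict_Icc_of_integral_mul_eq_ite {ι : Type*} [Fintype ι]
    [DecidableEq ι] {a b : ℝ} (hab : a ≤ b) {φ : ι → ℝ → ℝ}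
    (hφ : ∀ m, ContinuousOn (φ m) (Icc a b))
    (hortho : ∀ i j, ∫ x in a..b, φ i x * φ j x = if i = j then 1 else 0) :
    LinearIndependent ℝ fun m (x : Icc a b) => φ m x := by
  rw [Fintype.linearIndependent_iff]
  intro c hc j
  have hvanish : ∀ x ∈ uIcc a b, (∑ m, c m * φ m x) * φ j x = 0 := by
    intro x hx
    rw [uIcc_of_le hab] at hx
    have := congrFun hc ⟨x, hx⟩
    simp only [Finset.sum_apply, Pi.smul_apply, smul_eq_mul, Pi.zero_apply] at this
    rw [this, zero_mul]
  have hint (m : ι) : IntervalIntegrable (fun x => c m * φ m x * φ j x) volume a b :=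
    (((hφ m).const_smul (c m)).mul (hφ j)).intervalIntegrable_of_Icc hab
  calc c j = ∑ m, c m * ∫ x in a..b, φ m x * φ j x := by simp [hortho]
    _ = ∫ x in a..b, (∑ m, c m * φ m x) * φ j x := by
        simp only [Finset.sum_mul, ← intervalIntegral.integral_const_mul, ← mul_assoc]
        exact (intervalIntegral.integral_finsetSum fun m _ => hint m).symm
    _ = 0 := by rw [intervalIntegral.integral_congr hvanish]; simp

theorem Matrix.posDef_mul_diagonal_mul_conjTranspose_add {m n R : Type*} [Fintype m]
    [Fintype n] [DecidableEq n] [CommRing R] [PartialOrder R] [StarRing R] [StarOrderedRing R]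
    [NoZeroDivisors R] {Φ : Matrix m n R} (hΦ : LinearIndependent R Φ.row)
    {lam : n → R} (hlam : ∀ i, 0 < lam i) {B : Matrix m m R} (hB : B.PosSemidef) :
    (Φ * diagonal lam * Φᴴ + B).PosDef :=
  ((PosDef.diagonal hlam).mul_mul_conjTranspose_same (vecMul_injective_iff.2 hΦ)).add_posSemidef hB

theorem continuousOn_det_of_continuousOn_uncurry {ι α R : Type*} [Fintype ι] [DecidableEq ι]
    [TopologicalSpace α] [CommRing R] [TopologicalSpace R] [IsTopologicalRing R]
    {s : Set α} {k : α → α → R} (hk : ContinuousOn (fun p : α × α => k p.1 p.2) (s ×ˢ s)) :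
    ContinuousOn (fun v : ι → α => (Matrix.of fun i j => k (v i) (v j)).det)
      (univ.pi fun _ => s) := by
  refine continuous_id.matrix_det.comp_continuousOn
    (continuousOn_pi.2 fun i => continuousOn_pi.2 fun j => ?_)
  exact hk.comp (f := fun v : ι → α => (v i, v j))
    ((continuous_apply i).prodMk (continuous_apply j)).continuousOn
    fun v hv => ⟨hv i trivial, hv j trivial⟩

theorem eventually_pairwise_disjoint_closedBall {ι X : Type*} [Finite ι] [MetricSpace X]
    {u : ι → X} (hu : Function.Injective u) :
    ∀ᶠ δ in 𝓝 (0 : ℝ), Pairwise fun i j => Disjoint (closedBall (u i) δ) (closedBall (u j) δ) := by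
  simp only [Pairwise, eventually_all]
  intro i j hij
  filter_upwards [eventually_lt_nhds (half_pos (dist_pos.2 (hu.ne hij)))] with δ hδ
  exact closedBall_disjoint_closedBall (by linarith)

theorem eventually_closedBall_inter_subset_of_mem_nhdsWithin {X : Type*} [PseudoMetricSpace X]
    {S U : Set X} {x : X} (hU : U ∈ 𝓝[S] x) :
    ∀ᶠ δ in 𝓝 (0 : ℝ), closedBall x δ ∩ S ⊆ U := by
  obtain ⟨ε, hε, hsub⟩ := mem_nhdsWithin_iff.1 hU
  filter_upwards [eventually_lt_nhds hε] with δ hδ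
  exact (inter_subset_inter_left S (closedBall_subset_ball hδ)).trans hsub

theorem exists_points_and_radius_eval_matrix_det_ne_zero_general
    (d : ℕ) (k B : ℝ → ℝ → ℝ) (lam : Fin d → ℝ) (φ : Fin d → ℝ → ℝ)
    (hk : ContinuousOn (fun p : ℝ × ℝ => k p.1 p.2) (Set.Icc 0 1 ×ˢ Set.Icc 0 1))
    (hlam : ∀ m, 0 < lam m)
    (hφ : ∀ m, ContinuousOn (φ m) (Set.Icc 0 1))
    (hortho : ∀ i j, (∫ x in (0:ℝ)..1, φ i x * φ j x) = if i = j then 1 else 0)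
    (hBpsd : ∀ (n : ℕ) (s : Fin n → ℝ), (∀ i, s i ∈ Set.Icc (0:ℝ) 1) →
      (Matrix.of fun i j => B (s i) (s j)).PosSemidef)
    (hdecomp : ∀ s ∈ Set.Icc (0:ℝ) 1, ∀ t ∈ Set.Icc (0:ℝ) 1,
      k s t = (∑ m, lam m * φ m s * φ m t) + B s t) :
    ∃ u : Fin d → ℝ, ∃ δ : ℝ, 0 < δ ∧ (∀ i, u i ∈ Set.Icc (0:ℝ) 1) ∧ StrictMono u ∧
      (∀ i j : Fin d, i ≠ j →
        Disjoint (Set.Icc (u i - δ) (u i + δ)) (Set.Icc (u j - δ) (u j + δ))) ∧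
      ∀ v : Fin d → ℝ, (∀ i, v i ∈ Set.Icc (0:ℝ) 1) → (∀ i, |v i - u i| ≤ δ) →
        (Matrix.of fun i j => k (v i) (v j)).det ≠ 0 := by
  obtain ⟨s, hs⟩ := exists_linearIndependent_eval_of_linearIndependent
    (linearIndependent_restrict_Icc_of_integral_mul_eq_ite zero_le_one hφ hortho)
  set σ := Tuple.sort fun i => (s i : ℝ)
  set u : Fin d → ℝ := fun i => s (σ i)
  have hu (i : Fin d) : u i ∈ Icc 0 1 := (s (σ i)).2
  have hli : LinearIndependent ℝ (Matrix.of fun i m => φ m (u i)).row := hs.comp σ σ.injective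
  have hu_inj : Function.Injective u := fun i j h =>
    hli.injective (funext fun m => by simp [Matrix.row, h])
  have hu_mono : StrictMono u :=
    (Tuple.monotone_sort fun i => (s i : ℝ)).strictMono_of_injective hu_inj
  have hdet : (Matrix.of fun i j => k (u i) (u j)).det ≠ 0 := by
    have hK : Matrix.of (fun i j => k (u i) (u j)) = Matrix.of (fun i m => φ m (u i)) *
        Matrix.diagonal lam * (Matrix.of fun i m => φ m (u i))ᴴ +
          Matrix.of fun i j => B (u i) (u j) := by
      ext i j
      simp [hdecomp _ (hu i) _ (hu j), Matrix.mul_apply, Matrix.diagonal, mul_comm]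
    rw [hK]
    exact (Matrix.posDef_mul_diagonal_mul_conjTranspose_add hli hlam (hBpsd d u hu)).det_pos.ne'
  have hdet_near := continuousOn_det_of_continuousOn_uncurry hk u (fun i _ => hu i)
    (isOpen_compl_singleton.mem_nhds hdet)
  have hsmall := (eventually_pairwise_disjoint_closedBall hu_inj).and
    (eventually_closedBall_inter_subset_of_mem_nhdsWithin hdet_near)
  obtain ⟨δ, ⟨hdisj, hnear⟩, hδ⟩ :=
    ((hsmall.filter_mono nhdsWithin_le_nhds).and (self_mem_nhdsWithin (s := Ioi 0))).exists
  refine ⟨u, δ, hδ, hu, hu_mono, fun i j hij => ?_, fun v hv hvu => hnear ⟨?_, fun i _ => hv i⟩⟩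
  · simpa only [Real.closedBall_eq_Icc] using hdisj hij
  · simpa [dist_pi_le_iff hδ.le, Real.dist_eq] using hvu

/-- For a continuous kernel on `[0,1]²` of rank at least `d`, there are points
`u₁ < … < u_d` in `[0,1]` and a radius `δ > 0` such that the closed balls `[uⱼ-δ, uⱼ+δ]` are
pairwise disjoint and the evaluation matrix `(k(vᵢ,vⱼ))` is invertible for any points
`vᵢ ∈ [0,1]` with `|vᵢ - uᵢ| ≤ δ`. -/
theorem exists_points_and_radius_eval_matrix_det_ne_zero
    (d : ℕ) (k B : ℝ → ℝ → ℝ) (lam : Fin d → ℝ) (φ : Fin d → ℝ → ℝ)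
    (hk : ContinuousOn (fun p : ℝ × ℝ => k p.1 p.2) (Set.Icc 0 1 ×ˢ Set.Icc 0 1))
    (hlam : ∀ m, 0 < lam m)
    (hφ : ∀ m, ContinuousOn (φ m) (Set.Icc 0 1))
    (hortho : ∀ i j, (∫ x in (0:ℝ)..1, φ i x * φ j x) = if i = j then 1 else 0)
    (hB : ContinuousOn (fun p : ℝ × ℝ => B p.1 p.2) (Set.Icc 0 1 ×ˢ Set.Icc 0 1))
    (hBpsd : ∀ (n : ℕ) (s : Fin n → ℝ), (∀ i, s i ∈ Set.Icc (0:ℝ) 1) →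
      (Matrix.of fun i j => B (s i) (s j)).PosSemidef)
    (hdecomp : ∀ s ∈ Set.Icc (0:ℝ) 1, ∀ t ∈ Set.Icc (0:ℝ) 1,
      k s t = (∑ m, lam m * φ m s * φ m t) + B s t) :
    ∃ u : Fin d → ℝ, ∃ δ : ℝ, 0 < δ ∧ (∀ i, u i ∈ Set.Icc (0:ℝ) 1) ∧ StrictMono u ∧
      (∀ i j : Fin d, i ≠ j →
        Disjoint (Set.Icc (u i - δ) (u i + δ)) (Set.Icc (u j - δ) (u j + δ))) ∧
      ∀ v : Fin d → ℝ, (∀ i, v i ∈ Set.Icc (0:ℝ) 1) → (∀ i, |v i - u i| ≤ δ) →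
        (Matrix.of fun i j => k (v i) (v j)).det ≠ 0 :=
  exists_points_and_radius_eval_matrix_det_ne_zero_general d k B lam φ hk hlam hφ hortho hBpsd
    hdecomp
end

section
/- Let k : [0,1]×[0,1] → ℝ be a continuous kernel having rank at least d (in the sense of a rank-d Mercer decomposition with a continuous nonnegative-definite remainder). Then there exists a natural number L_* such that for every L ≥ L_* and every regular grid t_1,…,t_L ∈ [0,1], the L×L real matrix K_{X,L} with entries k(t_i,t_j) satisfies rank(K_{X,L}) ≥ d. -/
open MeasureTheory Matrix Filter Set
open scoped ComplexOrder

/-!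
Sample the eigenfunctions on the grid, `Φ = (φ_m(t_j))`, so that
`K = Φ Λ Φᵀ + B_L` with `B_L = (B(t_i, t_j))` positive semidefinite. The entries of the Gram
matrix `ΦᵀΦ` are Riemann sums of `φ_i φ_m`, hence uniformly (over regular grids) close to
`L δ_im` for large `L`; by Gershgorin `ΦᵀΦ` is then invertible. Consequently the `d × d` matrix
`Φᵀ K Φ = (ΦᵀΦ) Λ (ΦᵀΦ) + Φᵀ B_L Φ` is positive definite, so `d = rank (Φᵀ K Φ) ≤ rank K`.
-/

def IsRegularGrid {L : ℕ} (t : Fin L → ℝ) : Prop :=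
  ∀ j : Fin L, (j : ℝ) / L ≤ t j ∧ t j < ((j : ℝ) + 1) / L

lemma IsRegularGrid.mem_Icc {L : ℕ} {t : Fin L → ℝ} (ht : IsRegularGrid t) (j : Fin L) :
    t j ∈ Icc (0 : ℝ) 1 := by
  have hL : (0 : ℝ) < L := by exact_mod_cast j.pos
  have hj : (j : ℝ) + 1 ≤ L := by exact_mod_cast j.isLt
  refine ⟨(by positivity : (0 : ℝ) ≤ j / L).trans (ht j).1, (ht j).2.le.trans ?_⟩
  rwa [div_le_one hL]

lemma IsRegularGrid.abs_sub_le {L : ℕ} {t : Fin L → ℝ} (ht : IsRegularGrid t) (j : Fin L)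
    {x : ℝ} (hx : x ∈ Icc ((j : ℝ) / L) (((j : ℝ) + 1) / L)) : |t j - x| ≤ 1 / L := by
  have hcell : ((j : ℝ) + 1) / L - j / L = 1 / L := by ring
  rw [abs_sub_le_iff]
  constructor <;> linarith [(ht j).1, (ht j).2, hx.1, hx.2]

lemma abs_mul_sub_integral_le {f : ℝ → ℝ} {a b c ε : ℝ} (hab : a ≤ b)
    (hf : IntervalIntegrable f volume a b) (h : ∀ x ∈ Icc a b, |c - f x| ≤ ε) :
    |c * (b - a) - ∫ x in a..b, f x| ≤ ε * (b - a) := by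
  have hint : c * (b - a) - ∫ x in a..b, f x = ∫ x in a..b, (c - f x) := by
    rw [intervalIntegral.integral_sub intervalIntegrable_const hf,
      intervalIntegral.integral_const, smul_eq_mul, mul_comm]
  rw [hint, ← abs_of_nonneg (sub_nonneg.2 hab)]
  refine intervalIntegral.norm_integral_le_of_norm_le_const (f := fun x => c - f x) fun x hx => ?_
  rw [uIoc_of_le hab] at hx
  exact h x (Ioc_subset_Icc_self hx)

theorem ContinuousOn.eventually_abs_sum_isRegularGrid_sub_integral_le {f : ℝ → ℝ}
    (hf : ContinuousOn f (Icc 0 1)) {ε : ℝ} (hε : 0 < ε) :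
    ∀ᶠ L : ℕ in atTop, ∀ t : Fin L → ℝ, IsRegularGrid t →
      |∑ j, f (t j) - L * ∫ x in (0 : ℝ)..1, f x| ≤ L * ε := by
  obtain ⟨δ, hδ, hfδ⟩ :=
    Metric.uniformContinuousOn_iff.1 (isCompact_Icc.uniformContinuousOn_of_continuous hf) ε hε
  obtain ⟨n, hn⟩ := exists_nat_one_div_lt hδ
  refine eventually_atTop.2 ⟨n + 1, fun L hL t ht => ?_⟩
  have hLpos : (0 : ℝ) < L := by exact_mod_cast (Nat.succ_pos n).trans_le hL
  have hmesh : 1 / (L : ℝ) < δ :=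
    (one_div_le_one_div_of_le (a := (n : ℝ) + 1) (by positivity) (by exact_mod_cast hL)).trans_lt
      hn
  set a : ℕ → ℝ := fun j => j / L with ha
  have hstep : ∀ j, a (j + 1) - a j = 1 / L := fun j => by simp only [ha]; push_cast; ring
  have hcell : ∀ j < L, Icc (a j) (a (j + 1)) ⊆ Icc 0 1 := fun j hj =>
    Icc_subset_Icc (by positivity) ((div_le_one hLpos).2 (by exact_mod_cast hj))
  have hle : ∀ j, a j ≤ a (j + 1) := fun j => by linarith [hstep j, one_div_pos.2 hLpos]
  have hint : ∀ j < L, IntervalIntegrable f volume (a j) (a (j + 1)) := fun j hj =>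
    (hf.mono (uIcc_of_le (hle j) ▸ hcell j hj)).intervalIntegrable
  have hsplit : ∫ x in (0 : ℝ)..1, f x = ∑ j : Fin L, ∫ x in a j..a (j + 1), f x := by
    rw [← Finset.sum_range (fun j => ∫ x in a j..a (j + 1), f x),
      intervalIntegral.sum_integral_adjacent_intervals hint]
    simp [ha, hLpos.ne']
  have hterm : ∀ j : Fin L,
      |f (t j) * (1 / L) - ∫ x in a j..a (j + 1), f x| ≤ ε * (1 / L) := by
    intro j
    rw [← hstep]
    refine abs_mul_sub_integral_le (hle j) (hint j j.isLt) fun x hx => ?_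
    have hdist : |t j - x| ≤ 1 / L := ht.abs_sub_le j (by simpa [ha] using hx)
    exact (hfδ _ (ht.mem_Icc j) x (hcell j j.isLt hx) (hdist.trans_lt hmesh)).le
  calc |∑ j, f (t j) - L * ∫ x in (0 : ℝ)..1, f x|
      = L * |∑ j : Fin L, (f (t j) * (1 / L) - ∫ x in a j..a (j + 1), f x)| := by
        rw [hsplit, ← abs_of_pos hLpos, ← abs_mul, Finset.mul_sum, Finset.mul_sum,
          abs_of_pos hLpos, ← Finset.sum_sub_distrib]
        congr 1
        refine Finset.sum_congr rfl fun j _ => ?_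
        field_simp
    _ ≤ L * ∑ _j : Fin L, ε * (1 / L) := by
        gcongr
        exact (Finset.abs_sum_le_sum_abs _ _).trans (Finset.sum_le_sum fun j _ => hterm j)
    _ = L * ε := by
        rw [Finset.sum_const, Finset.card_univ, Fintype.card_fin, nsmul_eq_mul]
        field_simp

theorem Matrix.det_ne_zero_of_norm_sub_smul_one_le {K n : Type*} [NormedField K] [Fintype n]
    [DecidableEq n] {A : Matrix n n K} {c : K} {η : ℝ}
    (hA : ∀ i j, ‖(A - c • 1) i j‖ ≤ η)
    (hη : Fintype.card n * η < ‖c‖) : A.det ≠ 0 := by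
  refine det_ne_zero_of_sum_row_lt_diag fun i => ?_
  have hoff : ∀ j ∈ Finset.univ.erase i, ‖A i j‖ ≤ η := fun j hj => by
    simpa [one_apply_ne' (Finset.ne_of_mem_erase hj)] using hA i j
  have hdiag : ‖c‖ - η ≤ ‖A i i‖ := by
    have hi := hA i i
    simp only [sub_apply, smul_apply, one_apply_eq, smul_eq_mul, mul_one] at hi
    linarith [norm_sub_norm_le c (A i i), norm_sub_rev c (A i i)]
  calc ∑ j ∈ Finset.univ.erase i, ‖A i j‖ ≤ ∑ _j ∈ Finset.univ.erase i, η :=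
        Finset.sum_le_sum hoff
    _ = Fintype.card n * η - η := by
        rw [Finset.sum_erase_eq_sub (Finset.mem_univ i), Finset.sum_const, Finset.card_univ,
          nsmul_eq_mul]
    _ < ‖A i i‖ := by linarith

theorem Matrix.card_le_rank_mul_diagonal_mul_conjTranspose_add {𝕜 m n : Type*} [RCLike 𝕜]
    [Fintype m] [Fintype n] [DecidableEq n] (Φ : Matrix m n 𝕜) {lam : n → 𝕜}
    (hlam : ∀ i, 0 < lam i)
    {B : Matrix m m 𝕜} (hB : B.PosSemidef) (hΦ : IsUnit (Φᴴ * Φ)) :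
    Fintype.card n ≤ (Φ * diagonal lam * Φᴴ + B).rank := by
  have hH : (Φᴴ * (Φ * diagonal lam * Φᴴ + B) * Φ).PosDef := by
    have hsplit : Φᴴ * (Φ * diagonal lam * Φᴴ + B) * Φ
        = (Φᴴ * Φ)ᴴ * diagonal lam * (Φᴴ * Φ) + Φᴴ * B * Φ := by
      simp only [conjTranspose_mul, conjTranspose_conjTranspose, Matrix.mul_add, Matrix.add_mul,
        Matrix.mul_assoc]
    rw [hsplit]
    exact ((posDef_diagonal_iff.2 hlam).conjTranspose_mul_mul_same
      (mulVec_injective_of_isUnit hΦ)).add_posSemidef (hB.conjTranspose_mul_mul_same Φ)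
  calc Fintype.card n = (Φᴴ * (Φ * diagonal lam * Φᴴ + B) * Φ).rank :=
        (rank_of_isUnit _ hH.isUnit).symm
    _ ≤ _ := (rank_mul_le_left _ _).trans (rank_mul_le_right _ _)

theorem eventually_isUnit_gram_isRegularGrid {ι : Type*} [Fintype ι] [DecidableEq ι]
    {φ : ι → ℝ → ℝ} (hφ : ∀ i, ContinuousOn (φ i) (Icc 0 1))
    (hortho : ∀ i m, ∫ x in (0 : ℝ)..1, φ i x * φ m x = if i = m then 1 else 0) :
    ∀ᶠ L : ℕ in atTop, ∀ t : Fin L → ℝ, IsRegularGrid t →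
      IsUnit ((of fun j i => φ i (t j))ᴴ * of fun j i => φ i (t j)) := by
  -- any `ε` with `card ι * ε < 1` makes `ΦᵀΦ` strictly diagonally dominant
  set ε : ℝ := 1 / (Fintype.card ι + 1)
  have hε : Fintype.card ι * ε < 1 := by
    rw [mul_one_div, div_lt_one (by positivity)]
    linarith
  filter_upwards [eventually_gt_atTop 0, eventually_all.2 fun i => eventually_all.2 fun m =>
    ((hφ i).mul (hφ m)).eventually_abs_sum_isRegularGrid_sub_integral_le (by positivity : 0 < ε)]
    with L hLpos hgram t ht
  refine (isUnit_iff_isUnit_det _).2 (det_ne_zero_of_norm_sub_smul_one_le (c := (L : ℝ))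
    (η := L * ε) (fun i m => ?_) ?_).isUnit
  · simpa [mul_apply, hortho, one_apply] using hgram i m t ht
  · rw [Real.norm_natCast, mul_left_comm]
    exact mul_lt_of_lt_one_right (by exact_mod_cast hLpos) hε

theorem exists_critical_grid_size_rank_ge_general
    (d : ℕ) (k B : ℝ → ℝ → ℝ) (lam : Fin d → ℝ) (φ : Fin d → ℝ → ℝ)
    (hlam : ∀ m, 0 < lam m)
    (hφ : ∀ m, ContinuousOn (φ m) (Set.Icc 0 1))
    (hortho : ∀ i j, (∫ x in (0:ℝ)..1, φ i x * φ j x) = if i = j then 1 else 0)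
    (hBpsd : ∀ (n : ℕ) (s : Fin n → ℝ), (∀ i, s i ∈ Set.Icc (0:ℝ) 1) →
      (Matrix.of fun i j => B (s i) (s j)).PosSemidef)
    (hdecomp : ∀ s ∈ Set.Icc (0:ℝ) 1, ∀ t ∈ Set.Icc (0:ℝ) 1,
      k s t = (∑ m, lam m * φ m s * φ m t) + B s t) :
    ∃ Lstar : ℕ, ∀ L : ℕ, Lstar ≤ L → ∀ t : Fin L → ℝ,
      (∀ j : Fin L, (j : ℝ) / L ≤ t j ∧ t j < ((j : ℝ) + 1) / L) →
      d ≤ (Matrix.of fun i j => k (t i) (t j)).rank := by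
  obtain ⟨Lstar, hLstar⟩ := eventually_atTop.1 (eventually_isUnit_gram_isRegularGrid hφ hortho)
  refine ⟨Lstar, fun L hL t (ht : IsRegularGrid t) => ?_⟩
  set Φ : Matrix (Fin L) (Fin d) ℝ := of fun j m => φ m (t j)
  have hK : (of fun i j => k (t i) (t j))
      = Φ * diagonal lam * Φᴴ + of fun i j => B (t i) (t j) := by
    ext i j
    rw [Matrix.add_apply, mul_apply, of_apply, of_apply,
      hdecomp _ (ht.mem_Icc i) _ (ht.mem_Icc j)]
    simp [Φ, mul_diagonal, mul_comm, mul_left_comm]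
  simpa [hK] using card_le_rank_mul_diagonal_mul_conjTranspose_add Φ hlam
    (hBpsd L t ht.mem_Icc) (hLstar L hL t ht)

/-- For a continuous kernel on `[0,1]²` of rank at least `d`, there is a
critical grid size `L⋆` such that for every `L ≥ L⋆` and every regular grid
`t₁,…,t_L` (i.e. `(j-1)/L ≤ t_j < j/L`), the `L × L` matrix `(k(tᵢ,tⱼ))` has rank at
least `d`. -/
theorem exists_critical_grid_size_rank_ge
    (d : ℕ) (k B : ℝ → ℝ → ℝ) (lam : Fin d → ℝ) (φ : Fin d → ℝ → ℝ)
    (hk : ContinuousOn (fun p : ℝ × ℝ => k p.1 p.2) (Set.Icc 0 1 ×ˢ Set.Icc 0 1))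
    (hlam : ∀ m, 0 < lam m)
    (hφ : ∀ m, ContinuousOn (φ m) (Set.Icc 0 1))
    (hortho : ∀ i j, (∫ x in (0:ℝ)..1, φ i x * φ j x) = if i = j then 1 else 0)
    (hB : ContinuousOn (fun p : ℝ × ℝ => B p.1 p.2) (Set.Icc 0 1 ×ˢ Set.Icc 0 1))
    (hBpsd : ∀ (n : ℕ) (s : Fin n → ℝ), (∀ i, s i ∈ Set.Icc (0:ℝ) 1) →
      (Matrix.of fun i j => B (s i) (s j)).PosSemidef)
    (hdecomp : ∀ s ∈ Set.Icc (0:ℝ) 1, ∀ t ∈ Set.Icc (0:ℝ) 1,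
      k s t = (∑ m, lam m * φ m s * φ m t) + B s t) :
    ∃ Lstar : ℕ, ∀ L : ℕ, Lstar ≤ L → ∀ t : Fin L → ℝ,
      (∀ j : Fin L, (j : ℝ) / L ≤ t j ∧ t j < ((j : ℝ) + 1) / L) →
      d ≤ (Matrix.of fun i j => k (t i) (t j)).rank :=
  exists_critical_grid_size_rank_ge_general d k B lam φ hlam hφ hortho hBpsd hdecomp
end

section
/- Let r ≥ 1 and L ≥ 2r+1. Let K and K' be L×L real matrices with rank(K) ≤ r and rank(K') ≤ r, and suppose that every r×r submatrix of K (formed by choosing r distinct rows and r distinct columns) is invertible. If K_{ij} = K'_{ij} for all pairs i ≠ j, then K = K'; that is, the diagonal entries of K are uniquely determined by its off-diagonal entries among matrices of rank at most r. -/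
open Matrix

lemma rank_submatrix_le_aux {m α β : Type*} [Fintype m] [Fintype α] [Fintype β]
    [DecidableEq m] [DecidableEq α] [DecidableEq β]
    (K : Matrix m m ℝ) (f : α → m) (g : β → m) :
    (K.submatrix f g).rank ≤ K.rank := by
  have h1 : K.submatrix f g =
      ((1 : Matrix m m ℝ).submatrix f (Equiv.refl m)) * K *
      ((1 : Matrix m m ℝ).submatrix (Equiv.refl m) g) := by
    rw [Matrix.one_submatrix_mul, Matrix.mul_submatrix_one]
    simp [Function.comp]
  rw [h1]
  exact le_trans (Matrix.rank_mul_le_left _ _) (Matrix.rank_mul_le_right _ _)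

/-- Let `r ≥ 1`, `L ≥ 2r+1`, and let `K`, `K'` be `L × L` real matrices of
rank at most `r`. If every `r × r` submatrix of `K` (given by distinct rows and distinct
columns) is invertible and `K` and `K'` agree off the diagonal, then `K = K'`. -/
theorem eq_of_offdiag_eq_of_rank_le
    (r L : ℕ) (hr : 1 ≤ r) (hL : 2 * r + 1 ≤ L)
    (K K' : Matrix (Fin L) (Fin L) ℝ)
    (hK : K.rank ≤ r) (hK' : K'.rank ≤ r)
    (hsub : ∀ ri ci : Fin r → Fin L, Function.Injective ri → Function.Injective ci →
      IsUnit (K.submatrix ri ci).det)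
    (hoff : ∀ i j, i ≠ j → K i j = K' i j) :
    K = K' := by
  obtain ⟨m, rfl⟩ : ∃ m, L = m + 1 := ⟨L - 1, by omega⟩
  ext i j
  by_cases hij : i = j
  · subst hij
    -- build 2r indices distinct from i
    have h2r : 2 * r ≤ m := by omega
    set g : Fin (2 * r) → Fin (m + 1) := i.succAbove ∘ Fin.castLE h2r with hg
    have hginj : Function.Injective g :=
      (Fin.succAbove_right_injective).comp (Fin.castLE_injective h2r)
    have hgne : ∀ k, g k ≠ i := fun k => Fin.succAbove_ne i _
    set ri : Fin r → Fin (m + 1) := fun k => g ⟨k, by omega⟩ with hri_def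
    set ci : Fin r → Fin (m + 1) := fun k => g ⟨r + k, by omega⟩ with hci_def
    have hri : Function.Injective ri := by
      intro a b hab
      have := hginj hab
      simpa [Fin.ext_iff] using this
    have hci : Function.Injective ci := by
      intro a b hab
      have := hginj hab
      have : r + (a : ℕ) = r + b := by simpa [Fin.ext_iff] using this
      exact Fin.ext (by omega)
    have hdisj : ∀ a b, ri a ≠ ci b := by
      intro a b hab
      have := hginj hab
      have : (a : ℕ) = r + b := by simpa [Fin.ext_iff] using this
      omega
    have hrine : ∀ a, ri a ≠ i := fun a => hgne _
    have hcine : ∀ a, ci a ≠ i := fun a => hgne _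
    -- block data
    set A : Matrix (Fin r) (Fin r) ℝ := K.submatrix ri ci with hA_def
    have hAdet : IsUnit A.det := hsub ri ci hri hci
    haveI : Invertible A := A.invertibleOfIsUnitDet hAdet
    set B : Matrix (Fin r) Unit ℝ := Matrix.of fun k _ => K (ri k) i with hB_def
    set Cm : Matrix Unit (Fin r) ℝ := Matrix.of fun _ k => K i (ci k) with hC_def
    set R : Fin r ⊕ Unit → Fin (m + 1) := Sum.elim ri (fun _ => i) with hR_def
    set Co : Fin r ⊕ Unit → Fin (m + 1) := Sum.elim ci (fun _ => i) with hCo_def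
    -- the (r+1)×(r+1) submatrices have zero determinant
    have hdetzero : ∀ M : Matrix (Fin (m + 1)) (Fin (m + 1)) ℝ, M.rank ≤ r →
        (M.submatrix R Co).det = 0 := by
      intro M hM
      by_contra h
      have hu : IsUnit (M.submatrix R Co) :=
        (Matrix.isUnit_iff_isUnit_det _).mpr (isUnit_iff_ne_zero.mpr h)
      have hrank : (M.submatrix R Co).rank = Fintype.card (Fin r ⊕ Unit) :=
        Matrix.rank_of_isUnit _ hu
      have hle : (M.submatrix R Co).rank ≤ M.rank := rank_submatrix_le_aux M R Co
      have : Fintype.card (Fin r ⊕ Unit) = r + 1 := by simp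
      omega
    have hKblock : K.submatrix R Co =
        Matrix.fromBlocks A B Cm (Matrix.of fun _ _ => K i i) := by
      ext a b
      rcases a with a | a <;> rcases b with b | b <;> rfl
    have hK'block : K'.submatrix R Co =
        Matrix.fromBlocks A B Cm (Matrix.of fun _ _ => K' i i) := by
      ext a b
      rcases a with a | a <;> rcases b with b | b
      · exact (hoff _ _ (hdisj a b)).symm
      · exact (hoff _ _ (hrine a)).symm
      · exact (hoff _ _ (Ne.symm (hcine b))).symm
      · rfl
    have h1 : (0 : ℝ) = A.det *
        ((Matrix.of fun _ _ => K i i : Matrix Unit Unit ℝ) - Cm * ⅟A * B).det := by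
      rw [← Matrix.det_fromBlocks₁₁, ← hKblock]
      exact (hdetzero K hK).symm
    have h2 : (0 : ℝ) = A.det *
        ((Matrix.of fun _ _ => K' i i : Matrix Unit Unit ℝ) - Cm * ⅟A * B).det := by
      rw [← Matrix.det_fromBlocks₁₁, ← hK'block]
      exact (hdetzero K' hK').symm
    have hAne : A.det ≠ 0 := hAdet.ne_zero
    have e1 : ((Matrix.of fun _ _ => K i i : Matrix Unit Unit ℝ) - Cm * ⅟A * B).det = 0 := by
      rcases mul_eq_zero.mp h1.symm with h | h
      · exact absurd h hAne
      · exact h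
    have e2 : ((Matrix.of fun _ _ => K' i i : Matrix Unit Unit ℝ) - Cm * ⅟A * B).det = 0 := by
      rcases mul_eq_zero.mp h2.symm with h | h
      · exact absurd h hAne
      · exact h
    rw [Matrix.det_unique] at e1 e2
    rw [Matrix.sub_apply, sub_eq_zero] at e1 e2
    exact e1.trans e2.symm
  · exact hoff i j hij
end

section
/- Let h_1,…,h_d : [0,1] → ℝ be Borel-measurable functions that are linearly independent on every set of positive measure. Then the set {(x_1,…,x_d) ∈ [0,1]^d : det((h_j(x_i))_{i,j=1}^d) = 0} has d-dimensional Lebesgue measure zero; that is, the evaluation matrix (h_j(x_i))_{i,j=1}^d is invertible for Lebesgue-almost every tuple (x_1,…,x_d) ∈ [0,1]^d. -/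
open MeasureTheory Matrix

private lemma measurable_det_aux {α : Type*} [MeasurableSpace α] {m : ℕ}
    {f : α → (Fin m → Fin m → ℝ)} (hf : Measurable f) :
    Measurable fun a => (Matrix.of (f a)).det := by
  simp only [Matrix.det_apply']
  refine Finset.measurable_sum _ fun σ _ => ?_
  refine (Finset.measurable_prod _ fun i _ => ?_).const_mul _
  exact (measurable_pi_apply i).comp ((measurable_pi_apply (σ i)).comp hf)

private lemma gram_det_eq_zero_iff {d n : ℕ} (A : Matrix (Fin d) (Fin n) ℝ) :
    (Aᵀ * A).det = 0 ↔ ∃ α : Fin n → ℝ, α ≠ 0 ∧ A.mulVec α = 0 := by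
  rw [← Matrix.exists_mulVec_eq_zero_iff]
  constructor
  · rintro ⟨v, hv, hmul⟩
    refine ⟨v, hv, ?_⟩
    have h0 : dotProduct v ((Aᵀ * A).mulVec v) = 0 := by
      rw [hmul, dotProduct_zero]
    rw [← Matrix.mulVec_mulVec, Matrix.dotProduct_mulVec, Matrix.vecMul_transpose] at h0
    exact dotProduct_self_eq_zero.mp h0
  · rintro ⟨α, hα, hmul⟩
    exact ⟨α, hα, by rw [← Matrix.mulVec_mulVec, hmul, Matrix.mulVec_zero]⟩

/-- The set of `n`-tuples in `[0,1]` at which the evaluation vectors are linearly dependent. -/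
private def depSet {d : ℕ} (h : Fin d → ℝ → ℝ) (n : ℕ) : Set (Fin n → ℝ) :=
  {x | (∀ i, x i ∈ Set.Icc (0:ℝ) 1) ∧
    ∃ α : Fin n → ℝ, α ≠ 0 ∧ ∀ j, ∑ i, α i * h j (x i) = 0}

private lemma mulVec_iff {d n : ℕ} (h : Fin d → ℝ → ℝ) (x : Fin n → ℝ) (α : Fin n → ℝ) :
    (Matrix.of fun (j : Fin d) (i : Fin n) => h j (x i)).mulVec α = 0 ↔
      ∀ j, ∑ i, α i * h j (x i) = 0 := by
  rw [funext_iff]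
  refine forall_congr' fun j => ?_
  simp only [Matrix.mulVec, dotProduct, Matrix.of_apply, Pi.zero_apply]
  rw [Finset.sum_congr rfl fun i _ => mul_comm (h j (x i)) (α i)]

private lemma measurableSet_depSet {d : ℕ} {h : Fin d → ℝ → ℝ}
    (hmeas : ∀ j, Measurable (h j)) (n : ℕ) : MeasurableSet (depSet h n) := by
  have key : depSet h n = {x : Fin n → ℝ | ∀ i, x i ∈ Set.Icc (0:ℝ) 1} ∩
      ((fun x : Fin n → ℝ =>
        (Matrix.of fun i k => ∑ j, h j (x i) * h j (x k) : Matrix (Fin n) (Fin n) ℝ).det) ⁻¹'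
        {0}) := by
    ext x
    simp only [depSet, Set.mem_setOf_eq, Set.mem_inter_iff, Set.mem_preimage,
      Set.mem_singleton_iff]
    refine and_congr_right fun _ => ?_
    have heq : (Matrix.of fun i k => ∑ j, h j (x i) * h j (x k) : Matrix (Fin n) (Fin n) ℝ)
        = (Matrix.of fun (j : Fin d) (i : Fin n) => h j (x i))ᵀ *
          (Matrix.of fun (j : Fin d) (i : Fin n) => h j (x i)) := by
      ext i k
      simp [Matrix.mul_apply, Matrix.transpose_apply]
    rw [heq, gram_det_eq_zero_iff]
    exact (exists_congr fun α => and_congr_right fun _ => (mulVec_iff h x α)).symm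
  rw [key]
  refine MeasurableSet.inter ?_ ?_
  · rw [Set.setOf_forall]
    exact MeasurableSet.iInter fun i => (measurable_pi_apply i) measurableSet_Icc
  · have hent : ∀ (i k : Fin n), Measurable fun x : Fin n → ℝ => ∑ j, h j (x i) * h j (x k) :=
      fun i k => Finset.measurable_sum _ fun j _ =>
        ((hmeas j).comp (measurable_pi_apply i)).mul ((hmeas j).comp (measurable_pi_apply k))
    have hfm : Measurable (fun x : Fin n → ℝ =>
        (fun i k => ∑ j, h j (x i) * h j (x k) : Fin n → Fin n → ℝ)) :=
      measurable_pi_lambda _ fun i => measurable_pi_lambda _ fun k => hent i k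
    exact measurable_det_aux hfm (measurableSet_singleton 0)

private lemma null_comb {d : ℕ} {h : Fin d → ℝ → ℝ} (hmeas : ∀ j, Measurable (h j))
    (hindep : ∀ G : Set ℝ, G ⊆ Set.Icc 0 1 → MeasurableSet G → 0 < volume G →
      ∀ α : Fin d → ℝ, (∀ u ∈ G, (∑ j, α j * h j u) = 0) → α = 0)
    (α : Fin d → ℝ) (hα : α ≠ 0) :
    volume {t : ℝ | t ∈ Set.Icc (0:ℝ) 1 ∧ ∑ j, α j * h j t = 0} = 0 := by
  set G : Set ℝ := {t : ℝ | t ∈ Set.Icc (0:ℝ) 1 ∧ ∑ j, α j * h j t = 0} with hG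
  have hGsub : G ⊆ Set.Icc 0 1 := fun t ht => ht.1
  have hGmeas : MeasurableSet G := by
    have : G = Set.Icc 0 1 ∩ ((fun t => ∑ j, α j * h j t) ⁻¹' {0}) := by
      ext t; simp [hG]
    rw [this]
    exact measurableSet_Icc.inter
      ((Finset.measurable_sum _ fun j _ => (hmeas j).const_mul _) (measurableSet_singleton 0))
  by_contra hne
  exact hα (hindep G hGsub hGmeas (pos_iff_ne_zero.mpr hne) α fun u hu => hu.2)

private lemma exists_ker {d n : ℕ} (hn : n < d) (B : Matrix (Fin n) (Fin d) ℝ) :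
    ∃ α : Fin d → ℝ, α ≠ 0 ∧ B.mulVec α = 0 := by
  have hni : ¬ Function.Injective B.mulVecLin := by
    intro hinj
    have hle := LinearMap.finrank_le_finrank_of_injective hinj
    rw [Module.finrank_fin_fun, Module.finrank_fin_fun] at hle
    omega
  rw [← LinearMap.ker_eq_bot] at hni
  obtain ⟨α, hmem, hα⟩ := Submodule.exists_mem_ne_zero_of_ne_bot hni
  exact ⟨α, hα, by rwa [LinearMap.mem_ker, Matrix.mulVecLin_apply] at hmem⟩

private lemma depSet_null {d : ℕ} {h : Fin d → ℝ → ℝ} (hmeas : ∀ j, Measurable (h j))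
    (hindep : ∀ G : Set ℝ, G ⊆ Set.Icc 0 1 → MeasurableSet G → 0 < volume G →
      ∀ α : Fin d → ℝ, (∀ u ∈ G, (∑ j, α j * h j u) = 0) → α = 0) :
    ∀ n, n ≤ d → volume (depSet h n) = 0 := by
  intro n
  induction n with
  | zero =>
    intro _
    have : depSet h 0 = ∅ := by
      ext x
      simp only [depSet, Set.mem_setOf_eq, Set.mem_empty_iff_false, iff_false, not_and]
      rintro _ ⟨α, hα, _⟩
      exact hα (Subsingleton.elim α 0)
    simp [this]
  | succ n ih =>
    intro hle
    have hn : n < d := lt_of_lt_of_le (Nat.lt_succ_self n) hle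
    have ihn := ih hn.le
    set e := MeasurableEquiv.piFinSuccAbove (fun _ : Fin (n+1) => ℝ) 0 with he
    have hp : MeasurePreserving e volume ((volume : Measure ℝ).prod volume) :=
      MeasureTheory.volume_preserving_piFinSuccAbove (fun _ : Fin (n+1) => ℝ) 0
    have hT : MeasurableSet (depSet h (n+1)) := measurableSet_depSet hmeas (n+1)
    have hsymm : ∀ (t : ℝ) (y : Fin n → ℝ), e.symm (t, y) = Fin.cons t y := by
      intro t y
      show (Fin.insertNthEquiv (fun _ : Fin (n+1) => ℝ) 0) (t, y) = Fin.cons t y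
      simp [Fin.insertNthEquiv, Fin.insertNth_zero']
    set S : Set (ℝ × (Fin n → ℝ)) := e.symm ⁻¹' (depSet h (n+1)) with hSdef
    have hS : MeasurableSet S := e.symm.measurable hT
    have h1 : volume (depSet h (n+1)) = ((volume : Measure ℝ).prod volume) S := by
      rw [← hp.measure_preimage hS.nullMeasurableSet]
      congr 1
      ext x
      simp [hSdef]
    set S' : Set ((Fin n → ℝ) × ℝ) := Prod.swap ⁻¹' S with hS'def
    have hS' : MeasurableSet S' := measurable_swap hS
    have h2 : ((volume : Measure ℝ).prod volume) S
        = ((volume : Measure (Fin n → ℝ)).prod (volume : Measure ℝ)) S' :=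
      (Measure.measurePreserving_swap.measure_preimage hS.nullMeasurableSet).symm
    rw [h1, h2, Measure.measure_prod_null hS']
    have key : ∀ y : Fin n → ℝ, y ∉ depSet h n → volume (Prod.mk y ⁻¹' S') = 0 := by
      intro y hy
      have hslice : Prod.mk y ⁻¹' S' = {t : ℝ | Fin.cons t y ∈ depSet h (n+1)} := by
        ext t
        simp only [Set.mem_preimage, hS'def, Prod.swap_prod_mk, hSdef, Set.mem_setOf_eq, hsymm]
      rw [hslice]
      by_cases hIcc : ∀ i, y i ∈ Set.Icc (0:ℝ) 1
      · -- y is in the cube but independent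
        have hyindep : ∀ β : Fin n → ℝ, (∀ j, ∑ i, β i * h j (y i) = 0) → β = 0 := by
          intro β hβ
          by_contra hβne
          exact hy ⟨hIcc, β, hβne, hβ⟩
        obtain ⟨α, hα, hαker⟩ := exists_ker hn (Matrix.of fun i j => h j (y i))
        have hα2 : ∀ i, ∑ j, h j (y i) * α j = 0 := by
          intro i
          have := congrFun hαker i
          simpa [Matrix.mulVec, dotProduct] using this
        refine measure_mono_null ?_ (null_comb hmeas hindep α hα)
        intro t ht
        obtain ⟨hIcc', β, hβne, hβ⟩ := ht
        have ht1 : t ∈ Set.Icc (0:ℝ) 1 := by simpa using hIcc' 0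
        have hβ' : ∀ j, β 0 * h j t + ∑ i : Fin n, β i.succ * h j (y i) = 0 := by
          intro j
          have hbj := hβ j
          simp only [Fin.sum_univ_succ, Fin.cons_zero, Fin.cons_succ] at hbj
          exact hbj
        have hβ0 : β 0 ≠ 0 := by
          intro hβ0
          have hz : (fun i : Fin n => β i.succ) = 0 := by
            refine hyindep _ fun j => ?_
            have := hβ' j
            rw [hβ0, zero_mul, zero_add] at this
            exact this
          apply hβne
          funext i
          refine Fin.cases ?_ (fun i => ?_) i
          · exact hβ0
          · exact congrFun hz i
        refine ⟨ht1, ?_⟩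
        have hjt : ∀ j, h j t = ∑ i, (-(β i.succ) / β 0) * h j (y i) := by
          intro j
          have hsum : (∑ i, (-(β i.succ) / β 0) * h j (y i))
              = (-1 / β 0) * ∑ i, β i.succ * h j (y i) := by
            rw [Finset.mul_sum]
            exact Finset.sum_congr rfl fun i _ => by ring
          rw [hsum]
          have := hβ' j
          field_simp
          linarith [this]
        calc ∑ j, α j * h j t
            = ∑ j, ∑ i, (-(β i.succ) / β 0) * (h j (y i) * α j) := by
              refine Finset.sum_congr rfl fun j _ => ?_
              rw [hjt j, Finset.mul_sum]
              exact Finset.sum_congr rfl fun i _ => by ring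
          _ = ∑ i, (-(β i.succ) / β 0) * ∑ j, h j (y i) * α j := by
              rw [Finset.sum_comm]
              exact Finset.sum_congr rfl fun i _ => by rw [Finset.mul_sum]
          _ = 0 := by simp [hα2]
      · -- some coordinate of y is outside [0,1]: the slice is empty
        refine measure_mono_null ?_ (measure_empty (μ := (volume : Measure ℝ)))
        intro t ht
        exact absurd (fun i => by simpa [Fin.cons_succ] using ht.1 i.succ) hIcc
    rw [Filter.EventuallyEq, ae_iff]
    refine measure_mono_null (fun y hy => ?_) ihn
    simp only [Set.mem_setOf_eq, Pi.zero_apply] at hy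
    by_contra hyn
    exact hy (key y hyn)

/-- If `h₁,…,h_d : [0,1] → ℝ` are Borel-measurable and linearly independent on
every subset of `[0,1]` of positive Lebesgue measure, then the set of tuples
`(x₁,…,x_d) ∈ [0,1]^d` at which `det (h_j(x_i)) = 0` has `d`-dimensional Lebesgue measure
zero. -/
theorem det_eval_matrix_ne_zero_ae
    (d : ℕ) (h : Fin d → ℝ → ℝ)
    (hmeas : ∀ j, Measurable (h j))
    (hindep : ∀ G : Set ℝ, G ⊆ Set.Icc 0 1 → MeasurableSet G → 0 < volume G →
      ∀ α : Fin d → ℝ, (∀ u ∈ G, (∑ j, α j * h j u) = 0) → α = 0) :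
    volume {x : Fin d → ℝ | (∀ i, x i ∈ Set.Icc (0:ℝ) 1) ∧
      (Matrix.of fun i j => h j (x i)).det = 0} = 0 := by
  refine measure_mono_null ?_ (depSet_null hmeas hindep d le_rfl)
  rintro x ⟨hIcc, hdet⟩
  refine ⟨hIcc, ?_⟩
  have hdet' : (Matrix.of fun (j : Fin d) (i : Fin d) => h j (x i)).det = 0 := by
    have ht : (Matrix.of fun (j : Fin d) (i : Fin d) => h j (x i))
        = (Matrix.of fun (i : Fin d) (j : Fin d) => h j (x i))ᵀ := by
      ext j i
      simp [Matrix.transpose_apply]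
    rw [ht, Matrix.det_transpose]
    exact hdet
  obtain ⟨α, hα, hmul⟩ := (Matrix.exists_mulVec_eq_zero_iff).mpr hdet'
  exact ⟨α, hα, (mulVec_iff h x α).mp hmul⟩
end

section
/- Let L, q ≥ 1 with qL ≥ 2, and let H be an L×q real matrix all of whose entries are nonzero. Define the (qL)×(qL) real matrix G, with rows and columns indexed by pairs (i,k) ∈ {1,…,q}×{1,…,L}, by G((i,k),(j,l)) = H_{k,i}·H_{l,j} whenever (i,k) ≠ (j,l), and G((i,k),(i,k)) = 0 for all diagonal positions. Then det(G) ≠ 0, i.e. G is invertible. -/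
/-!
Writing `v (i, k) = H_{k,i}`, the matrix is `D (J - I) D` with `D = diagonal v` and `J` the all-ones
matrix. By the matrix determinant lemma `det (J - I) = (-1)^N (1 - N)` for `N = qL`, so the
determinant is `(-1)^N (1 - N) (∏ v)^2`, which is nonzero since `N ≥ 2` and every `v p ≠ 0`.
-/

namespace Matrix

variable {n R : Type*} [Fintype n] [DecidableEq n] [CommRing R]

def offDiagMul (v : n → R) : Matrix n n R :=
  of fun i j => if i = j then 0 else v i * v j

theorem offDiagMul_eq_diagonal_mul_mul_diagonal (v : n → R) :
    offDiagMul v = diagonal v * offDiagMul 1 * diagonal v := by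
  ext i j
  by_cases h : i = j <;> simp [offDiagMul, h]

theorem det_offDiagMul_one :
    (offDiagMul (1 : n → R)).det = (-1) ^ Fintype.card n * (1 - Fintype.card n) := by
  have hJ : offDiagMul (1 : n → R)
      = -(1 + replicateCol Unit (fun _ : n => (-1 : R)) * replicateRow Unit (1 : n → R)) := by
    ext i j
    by_cases h : i = j <;> simp [offDiagMul, h, mul_apply]
  rw [hJ, det_neg, det_one_add_replicateCol_mul_replicateRow]
  simp [dotProduct, sub_eq_add_neg]

theorem det_offDiagMul (v : n → R) :
    (offDiagMul v).det = (-1) ^ Fintype.card n * (1 - Fintype.card n) * (∏ i, v i) ^ 2 := by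
  rw [offDiagMul_eq_diagonal_mul_mul_diagonal, det_mul, det_mul, det_diagonal, det_offDiagMul_one]
  ring

theorem det_offDiagMul_ne_zero [IsDomain R] [CharZero R] {v : n → R} (hv : ∀ i, v i ≠ 0)
    (hn : Fintype.card n ≠ 1) : (offDiagMul v).det ≠ 0 := by
  rw [det_offDiagMul]
  refine mul_ne_zero (mul_ne_zero (pow_ne_zero _ (neg_ne_zero.2 one_ne_zero)) ?_)
    (pow_ne_zero _ (Finset.prod_ne_zero_iff.2 fun i _ => hv i))
  rw [sub_ne_zero]
  exact_mod_cast hn.symm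

end Matrix

theorem det_offdiag_rank_one_blocks_ne_zero_general
    (L q : ℕ) (hqL : 2 ≤ q * L)
    (H : Matrix (Fin L) (Fin q) ℝ) (hH : ∀ k i, H k i ≠ 0) :
    (Matrix.of fun p p' : Fin q × Fin L =>
      if p = p' then (0 : ℝ) else H p.2 p.1 * H p'.2 p'.1).det ≠ 0 :=
  Matrix.det_offDiagMul_ne_zero (v := fun p : Fin q × Fin L => H p.2 p.1) (fun p => hH p.2 p.1)
    (by rw [Fintype.card_prod, Fintype.card_fin, Fintype.card_fin]; omega)

/-- Let `L, q ≥ 1` with `qL ≥ 2` and let `H` be an `L × q` real matrix with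
all entries nonzero. The `(qL) × (qL)` matrix `G`, indexed by pairs `(i,k) ∈ {1,…,q}×{1,…,L}`,
with `G((i,k),(j,l)) = H_{k,i}·H_{l,j}` off the diagonal and `0` on the diagonal, has nonzero
determinant. -/
theorem det_offdiag_rank_one_blocks_ne_zero
    (L q : ℕ) (hL : 1 ≤ L) (hq : 1 ≤ q) (hqL : 2 ≤ q * L)
    (H : Matrix (Fin L) (Fin q) ℝ) (hH : ∀ k i, H k i ≠ 0) :
    (Matrix.of fun p p' : Fin q × Fin L =>
      if p = p' then (0 : ℝ) else H p.2 p.1 * H p'.2 p'.1).det ≠ 0 :=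
  det_offdiag_rank_one_blocks_ne_zero_general L q hqL H hH
end
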